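/- arXiv:2601.07802 — 2 statements merged into one kernel-verified Lean document; each statement's English description precedes it below -/
import Mathlib

section
/- Let G = (V,E) be a finite connected graph with spectral gap λ* ≥ λ > 0 and maximum degree at most d. For every nonempty K ⊆ V with V∖K ≠ ∅ and |K| ≤ |V|/2, the zero-average capacity cap₀(K) (the minimum of E(f,f) over f with f|_K = 1 and Σ d_x f(x) = 0) satisfies cap₀(K) ≥ c(λ,d)·|K|, where c(λ,d) > 0 is a constant depending only on λ and d. -/
open Finset
open scoped Classical

/-- Dirichlet energy `E(f,f)`, half the sum over ordered adjacent pairs. -/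
noncomputable def dirichletEnergy {V : Type} [Fintype V] (G : SimpleGraph V) (f : V → ℝ) : ℝ :=
  (1 / 2) * ∑ x : V, ∑ y : V, if G.Adj x y then (f x - f y) ^ 2 else 0

/-- The (discrete) zero-average capacity of `K`. -/
noncomputable def cap0 {V : Type} [Fintype V] (G : SimpleGraph V) [DecidableRel G.Adj]
    (K : Finset V) : ℝ :=
  sInf {r : ℝ | ∃ f : V → ℝ, (∀ x ∈ K, f x = 1) ∧
    (∑ x : V, (G.degree x : ℝ) * f x) = 0 ∧ dirichletEnergy G f = r}

lemma dirichletEnergy_smul {V : Type} [Fintype V] (G : SimpleGraph V) (a : ℝ) (f : V → ℝ) :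
    dirichletEnergy G (fun x => a * f x) = a ^ 2 * dirichletEnergy G f := by
  have key : ∀ x y : V, (if G.Adj x y then (a * f x - a * f y) ^ 2 else 0)
      = a ^ 2 * (if G.Adj x y then (f x - f y) ^ 2 else 0) := by
    intro x y; split <;> ring
  simp only [dirichletEnergy, key, ← Finset.mul_sum]
  ring

/-- Linear lower bound for the zero-average capacity: on a connected graph with spectral
gap at least `λ` and maximum degree at most `d`, `cap₀(K) ≥ c(λ,d)·|K|` whenever
`|K| ≤ |V|/2` (and `K ≠ ∅, V`). -/
theorem cap0_linear_lower_bound (lam : ℝ) (hlam : 0 < lam) (d : ℕ) (hd : 1 ≤ d) :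
    ∃ c : ℝ, 0 < c ∧
      ∀ (V : Type) (_ : Fintype V) (G : SimpleGraph V) (_ : DecidableRel G.Adj),
        G.Connected →
        (∀ x : V, G.degree x ≤ d) →
        (∀ f : V → ℝ, (∑ x : V, (G.degree x : ℝ) * f x ^ 2) = 1 →
            (∑ x : V, (G.degree x : ℝ) * f x) = 0 → lam ≤ dirichletEnergy G f) →
        ∀ K : Finset V, K.Nonempty → K ≠ Finset.univ → 2 * K.card ≤ Fintype.card V →
          c * (K.card : ℝ) ≤ cap0 G K := by
  refine ⟨lam, hlam, ?_⟩
  intro V _ G _ hconn hdeg hgap K hKne hKuniv hKhalf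
  -- card V ≥ 2, so every vertex has a neighbor
  have hcard2 : 2 ≤ Fintype.card V := le_trans (by
    have := hKne.card_pos; omega) hKhalf
  have hdegpos : ∀ x : V, 1 ≤ G.degree x := by
    intro x
    obtain ⟨y, hy⟩ := Fintype.exists_ne_of_one_lt_card (by omega) x
    obtain ⟨p⟩ := hconn.preconnected x y
    have hnil : ¬ p.Nil := by
      intro h
      exact hy (SimpleGraph.Walk.eq_of_length_eq_zero
        (SimpleGraph.Walk.nil_iff_length_eq.mp h)).symm
    exact (G.degree_pos_iff_exists_adj x).mpr
      ⟨p.getVert 1, SimpleGraph.Walk.adj_snd hnil⟩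
  -- the feasible set is nonempty
  set T : Set ℝ := {r : ℝ | ∃ f : V → ℝ, (∀ x ∈ K, f x = 1) ∧
    (∑ x : V, (G.degree x : ℝ) * f x) = 0 ∧ dirichletEnergy G f = r} with hT
  have hKc : (Kᶜ : Finset V).Nonempty := by
    rw [← Finset.card_pos, Finset.card_compl]
    have hKlt : K.card < Fintype.card V :=
      lt_of_le_of_ne (Finset.card_le_univ K) (fun h => hKuniv ((Finset.card_eq_iff_eq_univ _).mp h))
    omega
  have hBpos : (0:ℝ) < ∑ x ∈ Kᶜ, (G.degree x : ℝ) := by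
    apply Finset.sum_pos _ hKc
    intro x _
    exact_mod_cast lt_of_lt_of_le Nat.zero_lt_one (hdegpos x)
  set A : ℝ := ∑ x ∈ K, (G.degree x : ℝ)
  set B : ℝ := ∑ x ∈ Kᶜ, (G.degree x : ℝ)
  have hTne : T.Nonempty := by
    set f0 : V → ℝ := fun x => if x ∈ K then 1 else -(A / B)
    refine ⟨dirichletEnergy G f0, f0, fun x hx => by simp [f0, hx], ?_, rfl⟩
    rw [← Finset.sum_add_sum_compl K]
    have h1 : ∑ x ∈ K, (G.degree x : ℝ) * f0 x = A := by
      apply Finset.sum_congr rfl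
      intro x hx; simp [f0, hx]
    have h2 : ∑ x ∈ Kᶜ, (G.degree x : ℝ) * f0 x = B * (-(A / B)) := by
      calc ∑ x ∈ Kᶜ, (G.degree x : ℝ) * f0 x
          = ∑ x ∈ Kᶜ, (G.degree x : ℝ) * (-(A / B)) :=
            Finset.sum_congr rfl fun x hx => by
              simp [f0, Finset.mem_compl.mp hx]
        _ = B * (-(A / B)) := by rw [← Finset.sum_mul]
    rw [h1, h2]
    field_simp
    ring
  -- every element of the feasible set is at least lam * |K|
  have hbound : ∀ r ∈ T, lam * (K.card : ℝ) ≤ r := by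
    rintro r ⟨f, hfK, hf0, hfE⟩
    set S : ℝ := ∑ x : V, (G.degree x : ℝ) * f x ^ 2 with hS
    have hSK : (K.card : ℝ) ≤ S := by
      have : (K.card : ℝ) = ∑ x ∈ K, (1:ℝ) := by simp
      rw [this, hS, ← Finset.sum_add_sum_compl K]
      have hle : ∑ x ∈ K, (1:ℝ) ≤ ∑ x ∈ K, (G.degree x : ℝ) * f x ^ 2 := by
        apply Finset.sum_le_sum
        intro x hx
        rw [hfK x hx]
        simpa using (by exact_mod_cast hdegpos x : (1:ℝ) ≤ (G.degree x : ℝ))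
      have hcompl : (0:ℝ) ≤ ∑ x ∈ Kᶜ, (G.degree x : ℝ) * f x ^ 2 := by
        apply Finset.sum_nonneg
        intro x _
        positivity
      linarith
    have hSpos : (0:ℝ) < S := lt_of_lt_of_le (by exact_mod_cast hKne.card_pos) hSK
    set a : ℝ := 1 / Real.sqrt S
    have hsq : a ^ 2 = 1 / S := by
      rw [div_pow, one_pow, Real.sq_sqrt hSpos.le]
    have h1 : (∑ x : V, (G.degree x : ℝ) * (a * f x) ^ 2) = 1 := by
      have : ∀ x : V, (G.degree x : ℝ) * (a * f x) ^ 2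
          = a ^ 2 * ((G.degree x : ℝ) * f x ^ 2) := fun x => by ring
      simp only [this, ← Finset.mul_sum, ← hS, hsq]
      field_simp
    have h2 : (∑ x : V, (G.degree x : ℝ) * (a * f x)) = 0 := by
      have : ∀ x : V, (G.degree x : ℝ) * (a * f x)
          = a * ((G.degree x : ℝ) * f x) := fun x => by ring
      simp only [this, ← Finset.mul_sum, hf0, mul_zero]
    have hg := hgap (fun x => a * f x) h1 h2
    rw [dirichletEnergy_smul, hsq] at hg
    have : lam * S ≤ dirichletEnergy G f := by
      rw [one_div, inv_mul_eq_div] at hg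
      exact (le_div_iff₀ hSpos).mp hg
    rw [← hfE]
    calc lam * (K.card : ℝ) ≤ lam * S := by
          exact mul_le_mul_of_nonneg_left hSK hlam.le
      _ ≤ dirichletEnergy G f := this
  exact le_csInf hTne hbound
end

section
/- Let (B_t)_{t≥0} be a standard Brownian motion started at 0. For h > 0 and T ≥ C, P[inf_{0 ≤ t ≤ T}(B_t − ht) ≥ X] ≤ (C/√T)·e^{−c h² T}, where X is an independent Gaussian variable with bounded mean and variance, and C, c are absolute constants. -/
/-!
Sample the Brownian motion at the integer times `k ≤ n = ⌊T⌋`: staying above the level forces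
the Gaussian random walk `B 1, …, B n` to stay above the line `X + h k`. A Cameron–Martin change
of measure removes the drift at the price of the factor `exp (-h X - n h² / 2)`, the source of
the decay `exp (-c h² T)`. The driftless walk stays above `-b` with probability
`O ((1 + b)² / √n)`: for `b = 0`, splitting `B 0, …, B N` at its first minimum and reversing
time gives `∑ q_k q_(N-k) = 1` for the probabilities `q_k` of staying nonnegative, hence
`(N + 1) q_N² ≤ 1`; for `b > 0`, a prepended dip of depth `b + 1` followed by a rise of `b + 1`
reduces to `b = 0`. The `exp (-(h + 2) X)` dependence on the level is integrated against the
Gaussian law of `X`.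
-/

open MeasureTheory ProbabilityTheory
open scoped NNReal ENNReal

/-- A standard Brownian motion started at `0` under `μ`: starts at zero, has continuous
paths, measurable marginals, centered Gaussian increments of variance `t − s`, and
independent increments. -/
def IsStandardBM {Ω : Type} [MeasurableSpace Ω] (μ : Measure Ω) (B : ℝ → Ω → ℝ) : Prop :=
  (∀ ω, B 0 ω = 0) ∧
  (∀ ω, Continuous fun t => B t ω) ∧
  (∀ t, Measurable (B t)) ∧
  (∀ s t : ℝ, 0 ≤ s → s ≤ t →
    Measure.map (fun ω => B t ω - B s ω) μ = gaussianReal 0 (Real.toNNReal (t - s))) ∧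
  (∀ (n : ℕ) (ts : Fin (n + 1) → ℝ), Monotone ts → 0 ≤ ts 0 →
    iIndepFun
      (fun i : Fin n => fun ω => B (ts i.succ) ω - B (ts i.castSucc) ω) μ)

open Real

namespace SubcriticalBM

lemma gaussianPDFReal_mul_exp (m : ℝ) (v : ℝ≥0) (t x : ℝ) :
    gaussianPDFReal m v x * rexp (t * x)
      = rexp (t * m + t ^ 2 * v / 2) * gaussianPDFReal (m + t * v) v x := by
  rcases eq_or_ne v 0 with rfl | hv
  · simp
  have hv' : (0 : ℝ) < v := by positivity
  unfold gaussianPDFReal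
  rw [mul_assoc, ← Real.exp_add, mul_left_comm, ← Real.exp_add]
  congr 2
  field_simp
  ring

lemma lintegral_exp_mul_gaussianReal (m : ℝ) (v : ℝ≥0) (t : ℝ) {G : ℝ → ℝ≥0∞}
    (hG : Measurable G) :
    ∫⁻ x, ENNReal.ofReal (rexp (t * x)) * G x ∂gaussianReal m v
      = ENNReal.ofReal (rexp (t * m + t ^ 2 * v / 2))
        * ∫⁻ x, G (x + t * v) ∂gaussianReal m v := by
  rcases eq_or_ne v 0 with rfl | hv
  · simp [gaussianReal_zero_var, lintegral_dirac]
  have hexp : Measurable fun x => ENNReal.ofReal (rexp (t * x)) := by fun_prop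
  have hshift : (gaussianReal m v).map (· + t * v) = gaussianReal (m + t * v) v :=
    gaussianReal_map_add_const _
  rw [← lintegral_map hG (measurable_add_const _), hshift, gaussianReal_of_var_ne_zero _ hv,
    gaussianReal_of_var_ne_zero _ hv,
    lintegral_withDensity_eq_lintegral_mul _ (measurable_gaussianPDF _ _)
      (g := fun x => ENNReal.ofReal (rexp (t * x)) * G x) (hexp.mul hG),
    lintegral_withDensity_eq_lintegral_mul _ (measurable_gaussianPDF _ _) hG,
    ← lintegral_const_mul _ ((measurable_gaussianPDF _ _).mul hG)]
  congr 1 with x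
  simp only [Pi.mul_apply, gaussianPDF, ← mul_assoc]
  rw [← ENNReal.ofReal_mul (gaussianPDFReal_nonneg _ _ _),
    ← ENNReal.ofReal_mul (Real.exp_nonneg _), gaussianPDFReal_mul_exp]

lemma lintegral_exp_gaussianReal (m : ℝ) (v : ℝ≥0) (t : ℝ) :
    ∫⁻ x, ENNReal.ofReal (rexp (t * x)) ∂gaussianReal m v
      = ENNReal.ofReal (rexp (t * m + t ^ 2 * v / 2)) := by
  simpa using lintegral_exp_mul_gaussianReal m v t (G := fun _ => 1) measurable_const

lemma gaussianReal_Ici_one_le {a : ℝ} {v : ℝ≥0} (ha : a ≤ Real.sqrt v) :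
    gaussianReal 0 1 (Set.Ici 1) ≤ gaussianReal 0 v (Set.Ici a) := by
  have hscale : (gaussianReal 0 1).map (Real.sqrt v * ·) = gaussianReal 0 v := by
    rw [gaussianReal_map_const_mul, mul_zero]
    congr 1
    ext
    simp [Real.sq_sqrt v.coe_nonneg]
  rw [← hscale, Measure.map_apply (measurable_const_mul _) measurableSet_Ici]
  refine measure_mono fun x (hx : 1 ≤ x) => ?_
  simp only [Set.mem_preimage, Set.mem_Ici]
  nlinarith [Real.sqrt_nonneg v]

lemma gaussianReal_Iic_neg_eq (v : ℝ≥0) (a : ℝ) :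
    gaussianReal 0 v (Set.Iic (-a)) = gaussianReal 0 v (Set.Ici a) := by
  conv_rhs => rw [← neg_zero, ← gaussianReal_map_neg,
    Measure.map_apply measurable_neg measurableSet_Ici]
  congr 1
  ext x
  simp

lemma gaussianReal_Ici_one_pos : 0 < gaussianReal 0 1 (Set.Ici 1) := by
  refine pos_iff_ne_zero.mpr fun h => ?_
  have := gaussianReal_absolutelyContinuous' 0 one_ne_zero h
  simp at this

noncomputable abbrev stdGaussianPi (n : ℕ) : Measure (Fin n → ℝ) :=
  Measure.pi fun _ => gaussianReal 0 1

def partialSum {n : ℕ} (x : Fin n → ℝ) (k : ℕ) : ℝ :=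
  ∑ j ∈ Finset.range k, if h : j < n then x ⟨j, h⟩ else 0

@[simp]
lemma partialSum_zero {n : ℕ} (x : Fin n → ℝ) : partialSum x 0 = 0 := by simp [partialSum]

@[fun_prop]
lemma measurable_partialSum {n : ℕ} (k : ℕ) :
    Measurable fun x : Fin n → ℝ => partialSum x k := by
  refine Finset.measurable_sum _ fun j _ => ?_
  split_ifs <;> fun_prop

lemma partialSum_succ {n : ℕ} (x : Fin (n + 1) → ℝ) (k : ℕ) :
    partialSum x (k + 1) = x 0 + partialSum (Fin.tail x) k := by
  rw [partialSum, Finset.sum_range_succ', add_comm, partialSum]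
  refine congrArg₂ (· + ·) (by simp) (Finset.sum_congr rfl fun j _ => ?_)
  by_cases hj : j < n
  · simp [hj, Fin.tail, Fin.succ]
  · simp [hj]

def staySet (n : ℕ) (y h : ℝ) : Set (Fin n → ℝ) :=
  {x | ∀ k : ℕ, 1 ≤ k → k ≤ n → y + h * k ≤ partialSum x k}

lemma measurableSet_setOf_mem_staySet {α : Type*} [MeasurableSpace α] {n : ℕ} {f : α → ℝ}
    {g : α → Fin n → ℝ} (hf : Measurable f) (hg : Measurable g) (h : ℝ) :
    MeasurableSet {a | g a ∈ staySet n (f a) h} := by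
  have : {a | g a ∈ staySet n (f a) h}
      = ⋂ (k : ℕ) (_ : 1 ≤ k) (_ : k ≤ n), {a | f a + h * k ≤ partialSum (g a) k} := by
    ext
    simp [staySet]
  rw [this]
  exact MeasurableSet.iInter fun k => MeasurableSet.iInter fun _ => MeasurableSet.iInter fun _ =>
    measurableSet_le (by fun_prop) ((measurable_partialSum k).comp hg)

lemma measurableSet_staySet (n : ℕ) (y h : ℝ) : MeasurableSet (staySet n y h) :=
  measurableSet_setOf_mem_staySet (g := id) measurable_const measurable_id h

lemma staySet_anti {n : ℕ} {y₁ y₂ : ℝ} (h : ℝ) (hy : y₁ ≤ y₂) :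
    staySet n y₂ h ⊆ staySet n y₁ h :=
  fun _ hx k hk hkn => by linarith [hx k hk hkn]

lemma mem_staySet_succ {n : ℕ} {y h : ℝ} {x : Fin (n + 1) → ℝ} :
    x ∈ staySet (n + 1) y h ↔ y + h ≤ x 0 ∧ Fin.tail x ∈ staySet n (y + h - x 0) h := by
  simp only [staySet, Set.mem_ofPred_eq]
  constructor
  · intro hx
    refine ⟨by simpa [partialSum_succ] using hx 1 le_rfl (by omega), fun k hk hkn => ?_⟩
    have := hx (k + 1) (by omega) (by omega)
    rw [partialSum_succ] at this
    push_cast at this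
    linarith
  · rintro ⟨h0, hx⟩ k hk hkn
    obtain ⟨k, rfl⟩ := Nat.exists_eq_add_of_le' hk
    rw [partialSum_succ]
    rcases Nat.eq_zero_or_pos k with rfl | hk
    · simpa using h0
    · have := hx k hk (by omega)
      push_cast
      linarith

lemma stdGaussianPi_staySet_succ (n : ℕ) (y h : ℝ) :
    stdGaussianPi (n + 1) (staySet (n + 1) y h)
      = ∫⁻ a in Set.Ici (y + h), stdGaussianPi n (staySet n (y + h - a) h)
          ∂gaussianReal 0 1 := by
  have hS : MeasurableSet
      {p : ℝ × (Fin n → ℝ) | y + h ≤ p.1 ∧ p.2 ∈ staySet n (y + h - p.1) h} :=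
    (measurableSet_le measurable_const measurable_fst).inter
      (measurableSet_setOf_mem_staySet (by fun_prop) measurable_snd h)
  have hpre : staySet (n + 1) y h = MeasurableEquiv.piFinSuccAbove (fun _ => ℝ) 0 ⁻¹'
      {p | y + h ≤ p.1 ∧ p.2 ∈ staySet n (y + h - p.1) h} := by
    ext x
    exact mem_staySet_succ
  rw [hpre, (measurePreserving_piFinSuccAbove (fun _ => gaussianReal 0 1) 0).measure_preimage
    hS.nullMeasurableSet, Measure.prod_apply hS, ← lintegral_indicator measurableSet_Ici]
  congr 1 with a
  by_cases ha : y + h ≤ a <;> simp [ha]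

/-- Cameron–Martin bound: on the event, the density of the drifted walk against the driftless one
is `exp (-h S_n - n h² / 2) ≤ exp (-h y - n h² / 2)`. -/
lemma stdGaussianPi_staySet_le_exp_mul (n : ℕ) {y h : ℝ} (hy : y ≤ 0) (hh : 0 ≤ h) :
    stdGaussianPi n (staySet n y h)
      ≤ ENNReal.ofReal (rexp (-(h * y) - n * h ^ 2 / 2)) * stdGaussianPi n (staySet n y 0) := by
  induction n generalizing y with
  | zero =>
    have hstay : ∀ y h, staySet 0 y h = Set.univ := fun y h => by ext; simp [staySet]; omega
    rw [hstay, hstay, measure_univ, mul_one]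
    exact ENNReal.one_le_ofReal.mpr
      (Real.one_le_exp (by simpa using mul_nonneg hh (neg_nonneg.mpr hy)))
  | succ n ih =>
    set F : ℝ → ℝ≥0∞ := fun u => stdGaussianPi n (staySet n (y - u) 0)
    have hF : Measurable F :=
      Monotone.measurable fun u₁ u₂ hu => measure_mono (staySet_anti 0 (by linarith))
    set c : ℝ := -(h * y) - h ^ 2 - n * h ^ 2 / 2
    have hG : Measurable fun a => (Set.Ici y).indicator F (a - h) :=
      (hF.indicator measurableSet_Ici).comp (measurable_sub_const h)
    calc stdGaussianPi (n + 1) (staySet (n + 1) y h)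
        = ∫⁻ a in Set.Ici (y + h), stdGaussianPi n (staySet n (y + h - a) h)
            ∂gaussianReal 0 1 :=
          stdGaussianPi_staySet_succ n y h
      _ ≤ ∫⁻ a in Set.Ici (y + h),
            ENNReal.ofReal (rexp c) * (ENNReal.ofReal (rexp (h * a)) * F (a - h))
            ∂gaussianReal 0 1 := by
          refine setLIntegral_mono' measurableSet_Ici fun a (ha : y + h ≤ a) => ?_
          refine (ih (by linarith)).trans_eq ?_
          rw [← mul_assoc, ← ENNReal.ofReal_mul (Real.exp_nonneg _), ← Real.exp_add]
          congr 3 <;> ring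
      _ = ENNReal.ofReal (rexp c)
            * ∫⁻ a, ENNReal.ofReal (rexp (h * a)) * (Set.Ici y).indicator F (a - h)
            ∂gaussianReal 0 1 := by
          rw [lintegral_const_mul' _ _ ENNReal.ofReal_ne_top,
            ← lintegral_indicator measurableSet_Ici]
          congr 2 with a
          by_cases ha : y + h ≤ a
          · simp [ha, show y ≤ a - h by linarith]
          · simp [ha, show ¬ y ≤ a - h by intro; linarith]
      _ = ENNReal.ofReal (rexp c) * (ENNReal.ofReal (rexp (h ^ 2 / 2)) * ∫⁻ a in Set.Ici y, F a
            ∂gaussianReal 0 1) := by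
          rw [lintegral_exp_mul_gaussianReal 0 1 h hG, ← lintegral_indicator measurableSet_Ici]
          simp
      _ = ENNReal.ofReal (rexp (-(h * y) - ↑(n + 1) * h ^ 2 / 2))
            * stdGaussianPi (n + 1) (staySet (n + 1) y 0) := by
          rw [stdGaussianPi_staySet_succ n y 0, ← mul_assoc,
            ← ENNReal.ofReal_mul (Real.exp_nonneg _), ← Real.exp_add]
          simp only [add_zero, F]
          congr 3
          push_cast
          ring

lemma map_eq_stdGaussianPi {Ω : Type*} [MeasurableSpace Ω] {μ : Measure Ω}
    [IsProbabilityMeasure μ] {n : ℕ} {ξ : Fin n → Ω → ℝ} (hξ : iIndepFun ξ μ)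
    (hmeas : ∀ i, Measurable (ξ i)) (hlaw : ∀ i, μ.map (ξ i) = gaussianReal 0 1) :
    μ.map (fun ω i => ξ i ω) = stdGaussianPi n := by
  rw [(iIndepFun_iff_map_fun_eq_pi_map fun i => (hmeas i).aemeasurable).mp hξ]
  simp_rw [hlaw]

section Increments

variable {Ω : Type} {B : ℝ → Ω → ℝ}

def increments (B : ℝ → Ω → ℝ) (a n : ℕ) (ω : Ω) : Fin n → ℝ :=
  fun i => B (a + i + 1 : ℕ) ω - B (a + i : ℕ) ω

lemma partialSum_increments (a n : ℕ) (ω : Ω) {k : ℕ} (hk : k ≤ n) :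
    partialSum (increments B a n ω) k = B (a + k : ℕ) ω - B a ω := by
  convert Finset.sum_range_sub (fun j => B (a + j : ℕ) ω) k using 1
  · refine Finset.sum_congr rfl fun j hj => ?_
    rw [dif_pos ((Finset.mem_range.mp hj).trans_le hk)]
    rfl
  · simp

def stayAbove (B : ℝ → Ω → ℝ) (a n : ℕ) (y h : ℝ) : Set Ω :=
  {ω | ∀ k : ℕ, 1 ≤ k → k ≤ n → y + h * k ≤ B (a + k : ℕ) ω - B a ω}

lemma stayAbove_eq_preimage (a n : ℕ) (y h : ℝ) :
    stayAbove B a n y h = increments B a n ⁻¹' staySet n y h := by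
  ext ω
  simp only [stayAbove, staySet, Set.mem_preimage, Set.mem_ofPred_eq]
  refine forall₃_congr fun k _ hk => ?_
  rw [partialSum_increments a n ω hk]

lemma stayAbove_subset_of_le {a n N : ℕ} (y h : ℝ) (hnN : n ≤ N) :
    stayAbove B a N y h ⊆ stayAbove B a n y h :=
  fun _ hω k hk hkn => hω k hk (hkn.trans hnN)

def strictMinSet (k : ℕ) : Set (Fin k → ℝ) := {z | ∀ i < k, partialSum z k < partialSum z i}

lemma measurableSet_strictMinSet (k : ℕ) : MeasurableSet (strictMinSet k) := by
  simp only [strictMinSet, Set.ofPred_forall]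
  exact .iInter fun i => .iInter fun _ =>
    measurableSet_lt (measurable_partialSum k) (measurable_partialSum i)

lemma increments_preimage_strictMinSet (k : ℕ) :
    increments B 0 k ⁻¹' strictMinSet k = {ω | ∀ i < k, B k ω < B i ω} := by
  ext ω
  simp only [strictMinSet, Set.mem_preimage, Set.mem_ofPred_eq, partialSum_increments 0 k ω le_rfl]
  refine forall₂_congr fun i hi => ?_
  simp [partialSum_increments 0 k ω hi.le]

def reversedIncrements (B : ℝ → Ω → ℝ) (k : ℕ) (ω : Ω) : Fin k → ℝ :=
  fun i => -increments B 0 k ω i.rev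

lemma partialSum_reversedIncrements {k m : ℕ} (ω : Ω) (hm : m ≤ k) :
    partialSum (reversedIncrements B k ω) m = B (k - m : ℕ) ω - B k ω := by
  convert Finset.sum_range_sub (fun j => B (k - j : ℕ) ω) m using 1
  · refine Finset.sum_congr rfl fun j hj => ?_
    have hjk : j < k := (Finset.mem_range.mp hj).trans_le hm
    simp only [dif_pos hjk, reversedIncrements, increments, Fin.val_rev, zero_add]
    rw [show k - (j + 1) + 1 = k - j by omega]
    ring
  · simp

end Increments

lemma exists_first_argmin {α : Type*} [LinearOrder α] (f : ℕ → α) (N : ℕ) :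
    ∃ k ≤ N, (∀ i < k, f k < f i) ∧ ∀ i ≤ N, f k ≤ f i := by
  classical
  have hmin : ∃ k ≤ N, ∀ i ≤ N, f k ≤ f i := by
    obtain ⟨k, hk, hmin⟩ := (Finset.range (N + 1)).exists_min_image f ⟨0, by simp⟩
    exact ⟨k, by simpa [Nat.lt_succ_iff] using hk,
      fun i hi => hmin i (by simpa [Nat.lt_succ_iff])⟩
  obtain ⟨hkN, hk⟩ := Nat.find_spec hmin
  refine ⟨Nat.find hmin, hkN, fun i hi => ?_, hk⟩
  have hnot := Nat.find_min hmin hi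
  push Not at hnot
  obtain ⟨j, hj, hlt⟩ := hnot (by omega)
  exact (hk j hj).trans_lt hlt

lemma div_sqrt_mul_exp_le {a K h T m v : ℝ} {n : ℕ} (ha : 0 ≤ a) (hh : 0 ≤ h)
    (hm : |m| ≤ K) (hv : v ≤ K) (hT : 8 * K + 2 ≤ T) (hn : T < n + 1) :
    a / Real.sqrt (n + 1) * rexp (-(n * h ^ 2 / 2)) * rexp (-(h + 2) * m + (h + 2) ^ 2 * v / 2)
      ≤ a * rexp (8 * K) / Real.sqrt T * rexp (-(1 / 8 * h ^ 2 * T)) := by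
  obtain ⟨hm₁, hm₂⟩ := abs_le.mp hm
  have hexp : -(n * h ^ 2 / 2) + (-(h + 2) * m + (h + 2) ^ 2 * v / 2)
      ≤ 8 * K + -(1 / 8 * h ^ 2 * T) := by
    have e1 : -(h + 2) * m + (h + 2) ^ 2 * v / 2 ≤ (h + 2) * K + (h + 2) ^ 2 * K / 2 := by
      nlinarith [mul_le_mul_of_nonneg_left hv (sq_nonneg (h + 2))]
    have e2 : (h + 2) * K + (h + 2) ^ 2 * K / 2 ≤ 2 * K * h ^ 2 + 8 * K := by
      nlinarith [sq_nonneg (h - 2), sq_nonneg h]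
    nlinarith [sq_nonneg h]
  calc a / Real.sqrt (n + 1) * rexp (-(n * h ^ 2 / 2)) * rexp (-(h + 2) * m + (h + 2) ^ 2 * v / 2)
      = a / Real.sqrt (n + 1) * rexp (-(n * h ^ 2 / 2) + (-(h + 2) * m + (h + 2) ^ 2 * v / 2)) := by
        rw [mul_assoc, ← Real.exp_add]
    _ ≤ a / Real.sqrt T * rexp (8 * K + -(1 / 8 * h ^ 2 * T)) := by
        have := Real.sqrt_pos.mpr (show 0 < T by linarith [abs_nonneg m])
        gcongr
    _ = a * rexp (8 * K) / Real.sqrt T * rexp (-(1 / 8 * h ^ 2 * T)) := by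
        rw [Real.exp_add]
        ring

end SubcriticalBM

open SubcriticalBM

namespace IsStandardBM

variable {Ω : Type} [MeasurableSpace Ω] {μ : Measure Ω} {B : ℝ → Ω → ℝ}

lemma apply_zero (hBM : IsStandardBM μ B) (ω : Ω) : B 0 ω = 0 := hBM.1 ω

lemma measurable (hBM : IsStandardBM μ B) (t : ℝ) : Measurable (B t) := hBM.2.2.1 t

lemma map_natCast_add_sub (hBM : IsStandardBM μ B) (a m : ℕ) :
    μ.map (fun ω => B (a + m : ℕ) ω - B a ω) = gaussianReal 0 m := by
  rw [hBM.2.2.2.1 _ _ (Nat.cast_nonneg a) (by simp)]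
  congr 1
  simp

lemma map_natCast (hBM : IsStandardBM μ B) (m : ℕ) : μ.map (B m) = gaussianReal 0 m := by
  simpa [hBM.apply_zero] using hBM.map_natCast_add_sub 0 m

lemma measurable_increments (hBM : IsStandardBM μ B) (a n : ℕ) :
    Measurable (increments B a n) :=
  measurable_pi_lambda _ fun _ => (hBM.measurable _).sub (hBM.measurable _)

lemma iIndepFun_increments (hBM : IsStandardBM μ B) (a n : ℕ) :
    iIndepFun (fun i ω => increments B a n ω i) μ :=
  hBM.2.2.2.2 n (fun j => (a + j : ℕ)) (fun i j hij => by simpa using hij) (Nat.cast_nonneg _)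

lemma indepFun_increments (hBM : IsStandardBM μ B) (a k n : ℕ) :
    IndepFun (increments B a k) (increments B (a + k) n) μ := by
  classical
  let S : Finset (Fin (k + n)) := {i | (i : ℕ) < k}
  let T : Finset (Fin (k + n)) := {i | k ≤ (i : ℕ)}
  have hST : Disjoint S T := Finset.disjoint_filter.mpr fun _ _ h h' => by omega
  have hblocks := (hBM.iIndepFun_increments a (k + n)).indepFun_finset S T hST
    fun _ => (hBM.measurable _).sub (hBM.measurable _)
  let φS : (S → ℝ) → Fin k → ℝ := fun v j => v ⟨Fin.castAdd n j, by simp [S]⟩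
  let φT : (T → ℝ) → Fin n → ℝ := fun v j => v ⟨Fin.natAdd k j, by simp [T]⟩
  convert hblocks.comp (φ := φS) (ψ := φT) (by fun_prop) (by fun_prop) using 1 <;>
    ext ω j <;> simp [φS, φT, increments, add_assoc]

lemma indepFun_sub (hBM : IsStandardBM μ B) (a k n : ℕ) :
    IndepFun (fun ω => B (a + k : ℕ) ω - B a ω)
      (fun ω => B (a + k + n : ℕ) ω - B (a + k : ℕ) ω) μ := by
  convert (hBM.indepFun_increments a k n).comp (measurable_partialSum k) (measurable_partialSum n)
    using 1 <;> ext ω <;> simp [partialSum_increments]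

lemma mem_stayAbove_zero (hBM : IsStandardBM μ B) {n : ℕ} {y h : ℝ} {ω : Ω} :
    ω ∈ stayAbove B 0 n y h ↔ ∀ k : ℕ, 1 ≤ k → k ≤ n → y + h * k ≤ B k ω := by
  simp [stayAbove, hBM.apply_zero]

lemma measurableSet_stayAbove (hBM : IsStandardBM μ B) (a n : ℕ) (y h : ℝ) :
    MeasurableSet (stayAbove B a n y h) := by
  rw [stayAbove_eq_preimage]
  exact hBM.measurable_increments a n (measurableSet_staySet n y h)

lemma measure_forall_pos (hBM : IsStandardBM μ B) (k : ℕ) :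
    μ {ω | ∀ m : ℕ, 1 ≤ m → m ≤ k → 0 < B m ω} = μ (stayAbove B 0 k 0 0) := by
  have hne : ∀ᵐ ω ∂μ, ∀ m : ℕ, B (m + 1 : ℕ) ω ≠ 0 := by
    refine ae_all_iff.mpr fun m => ae_of_ae_map (p := (· ≠ 0)) (hBM.measurable _).aemeasurable ?_
    have := nullSingletonClass_gaussianReal (μ := 0) (v := (m + 1 : ℕ)) (by simp)
    rw [hBM.map_natCast]
    exact Measure.ae_ne _ 0
  refine measure_congr (Filter.eventuallyEq_set.mpr ?_)
  filter_upwards [hne] with ω hω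
  simp only [hBM.mem_stayAbove_zero, zero_add, zero_mul]
  refine forall₃_congr fun m hm _ => ⟨le_of_lt, fun h => h.lt_of_ne' ?_⟩
  obtain ⟨m, rfl⟩ := Nat.exists_eq_add_of_le' hm
  exact hω m

lemma setOf_forall_Icc_subset (hBM : IsStandardBM μ B) {X : Ω → ℝ} {h T : ℝ} {n : ℕ}
    (hT : 0 ≤ T) (hnT : n ≤ T) :
    {ω | ∀ t ∈ Set.Icc (0 : ℝ) T, X ω ≤ B t ω - h * t}
      ⊆ {ω | X ω ≤ 0 ∧ ω ∈ stayAbove B 0 n (X ω) h} := by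
  intro ω hω
  refine ⟨by simpa [hBM.apply_zero] using hω 0 ⟨le_rfl, hT⟩,
    hBM.mem_stayAbove_zero.mpr fun k _ hk => ?_⟩
  have := hω k ⟨Nat.cast_nonneg k, le_trans (by exact_mod_cast hk) hnT⟩
  linarith

lemma le_measure_dip_rise (hBM : IsStandardBM μ B) {L : ℕ} {a : ℝ} (ha : a ≤ Real.sqrt L) :
    gaussianReal 0 1 (Set.Ici 1) * gaussianReal 0 1 (Set.Ici 1)
      ≤ μ {ω | B L ω ≤ -a ∧ a ≤ B (L + L : ℕ) ω - B L ω} := by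
  have hindep := hBM.indepFun_sub 0 L L
  simp only [zero_add, Nat.cast_zero, hBM.apply_zero, sub_zero] at hindep
  rw [show {ω | B L ω ≤ -a ∧ a ≤ B (L + L : ℕ) ω - B L ω}
      = B L ⁻¹' Set.Iic (-a) ∩ (fun ω => B (L + L : ℕ) ω - B L ω) ⁻¹' Set.Ici a
      from rfl,
    hindep.measure_inter_preimage_eq_mul _ _ measurableSet_Iic measurableSet_Ici,
    ← Measure.map_apply (hBM.measurable _) measurableSet_Iic, hBM.map_natCast,
    ← Measure.map_apply (f := fun ω => B (L + L : ℕ) ω - B L ω)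
      ((hBM.measurable _).sub (hBM.measurable _)) measurableSet_Ici,
    hBM.map_natCast_add_sub, gaussianReal_Iic_neg_eq]
  have hL : a ≤ Real.sqrt (L : ℝ≥0) := by simpa using ha
  exact mul_le_mul' (gaussianReal_Ici_one_le hL) (gaussianReal_Ici_one_le hL)

lemma reversedIncrements_preimage_strictMinSet (hBM : IsStandardBM μ B) (k : ℕ) :
    reversedIncrements B k ⁻¹' strictMinSet k
      = {ω | ∀ m : ℕ, 1 ≤ m → m ≤ k → 0 < B m ω} := by
  ext ω
  simp only [strictMinSet, Set.mem_preimage, Set.mem_ofPred_eq,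
    partialSum_reversedIncrements ω le_rfl, Nat.sub_self, Nat.cast_zero, hBM.apply_zero]
  constructor
  · intro h m hm hmk
    have := h (k - m) (by omega)
    rw [partialSum_reversedIncrements ω (by omega), show k - (k - m) = m by omega] at this
    linarith
  · intro h i hi
    rw [partialSum_reversedIncrements ω hi.le]
    linarith [h (k - i) (by omega) (by omega)]

variable [IsProbabilityMeasure μ]

lemma map_increments (hBM : IsStandardBM μ B) (a n : ℕ) :
    μ.map (increments B a n) = stdGaussianPi n :=
  map_eq_stdGaussianPi (hBM.iIndepFun_increments a n)
    (fun _ => (hBM.measurable _).sub (hBM.measurable _))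
    fun i => by simpa [increments, add_assoc] using hBM.map_natCast_add_sub (a + i) 1

lemma measure_increments_preimage (hBM : IsStandardBM μ B) (a n : ℕ)
    {A : Set (Fin n → ℝ)} (hA : MeasurableSet A) :
    μ (increments B a n ⁻¹' A) = stdGaussianPi n A := by
  rw [← hBM.map_increments a n, Measure.map_apply (hBM.measurable_increments a n) hA]

lemma measure_stayAbove (hBM : IsStandardBM μ B) (a n : ℕ) (y h : ℝ) :
    μ (stayAbove B a n y h) = stdGaussianPi n (staySet n y h) := by
  rw [stayAbove_eq_preimage, hBM.measure_increments_preimage a n (measurableSet_staySet n y h)]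

lemma measure_stayAbove_le_exp_mul (hBM : IsStandardBM μ B) (a n : ℕ) {y h : ℝ} (hy : y ≤ 0)
    (hh : 0 ≤ h) :
    μ (stayAbove B a n y h)
      ≤ ENNReal.ofReal (rexp (-(h * y) - n * h ^ 2 / 2)) * μ (stayAbove B a n y 0) := by
  simpa only [hBM.measure_stayAbove] using stdGaussianPi_staySet_le_exp_mul n hy hh

lemma measure_inter_stayAbove (hBM : IsStandardBM μ B) {a : ℕ} {A : Set (Fin a → ℝ)}
    (hA : MeasurableSet A) (n : ℕ) (y h : ℝ) :
    μ (increments B 0 a ⁻¹' A ∩ stayAbove B a n y h)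
      = μ (increments B 0 a ⁻¹' A) * μ (stayAbove B 0 n y h) := by
  have hindep := hBM.indepFun_increments 0 a n
  rw [zero_add] at hindep
  rw [stayAbove_eq_preimage, hindep.measure_inter_preimage_eq_mul _ _ hA
    (measurableSet_staySet n y h), ← stayAbove_eq_preimage, hBM.measure_stayAbove,
    hBM.measure_stayAbove]

lemma map_reversedIncrements (hBM : IsStandardBM μ B) (k : ℕ) :
    μ.map (reversedIncrements B k) = stdGaussianPi k := by
  have hmeas : ∀ i : Fin k, Measurable fun ω => increments B 0 k ω i.rev :=
    fun i => (measurable_pi_apply i.rev).comp (hBM.measurable_increments 0 k)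
  refine map_eq_stdGaussianPi (ξ := fun i => (fun x => -x) ∘ fun ω => increments B 0 k ω i.rev)
    (((hBM.iIndepFun_increments 0 k).precomp Fin.rev_injective).comp _ fun _ => measurable_neg)
    (fun i => measurable_neg.comp (hmeas i)) fun i => ?_
  rw [← Measure.map_map measurable_neg (hmeas i), ← neg_zero, ← gaussianReal_map_neg]
  congr 1
  simpa [increments] using hBM.map_natCast_add_sub i.rev 1

lemma measure_forall_lt (hBM : IsStandardBM μ B) (k : ℕ) :
    μ {ω | ∀ i < k, B k ω < B i ω}
      = μ {ω | ∀ m : ℕ, 1 ≤ m → m ≤ k → 0 < B m ω} := by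
  have hrev : Measurable (reversedIncrements B k) :=
    measurable_pi_lambda _ fun i => ((measurable_pi_apply i.rev).comp
      (hBM.measurable_increments 0 k)).neg
  rw [← increments_preimage_strictMinSet, ← hBM.reversedIncrements_preimage_strictMinSet,
    hBM.measure_increments_preimage 0 k (measurableSet_strictMinSet k),
    ← hBM.map_reversedIncrements,
    Measure.map_apply hrev (measurableSet_strictMinSet k)]

/-- Splitting at the first time `k ≤ N` where `B 0, …, B N` attain their minimum. -/
lemma sum_measure_stayAbove_mul (hBM : IsStandardBM μ B) (N : ℕ) :
    ∑ k ∈ Finset.range (N + 1), μ (stayAbove B 0 k 0 0) * μ (stayAbove B 0 (N - k) 0 0)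
      = 1 := by
  let D : ℕ → Set Ω := fun k => {ω | ∀ i < k, B k ω < B i ω} ∩ stayAbove B k (N - k) 0 0
  have hD : ∀ k, μ (D k) = μ (stayAbove B 0 k 0 0) * μ (stayAbove B 0 (N - k) 0 0) := by
    intro k
    rw [← hBM.measure_forall_pos, ← hBM.measure_forall_lt, ← increments_preimage_strictMinSet,
      ← hBM.measure_inter_stayAbove (measurableSet_strictMinSet k),
      increments_preimage_strictMinSet]
  have hcover : ⋃ k ∈ Finset.range (N + 1), D k = Set.univ := by
    refine Set.eq_univ_of_forall fun ω => ?_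
    obtain ⟨k, hkN, hlt, hle⟩ := exists_first_argmin (fun k : ℕ => B k ω) N
    refine Set.mem_biUnion (Finset.mem_range.mpr (Nat.lt_succ_of_le hkN))
      ⟨hlt, fun m _ hm => ?_⟩
    simpa using hle (k + m) (by omega)
  have hdisj : Set.PairwiseDisjoint (Finset.range (N + 1) : Set ℕ) D := by
    refine fun k hk l hl hkl => Set.disjoint_left.mpr fun ω hωk hωl => ?_
    wlog hlt : k < l generalizing k l
    · exact this l hl k hk (Ne.symm hkl) hωl hωk (by omega)
    have hkl : 0 + 0 * ((l - k : ℕ) : ℝ) ≤ B (k + (l - k) : ℕ) ω - B k ω :=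
      hωk.2 (l - k) (by omega) (by simp at hl; omega)
    rw [Nat.add_sub_cancel' hlt.le] at hkl
    linarith [hωl.1 k hlt]
  have hDmeas : ∀ k, MeasurableSet (D k) := fun k => by
    simpa only [D, ← increments_preimage_strictMinSet] using
      (hBM.measurable_increments 0 k (measurableSet_strictMinSet k)).inter
        (hBM.measurableSet_stayAbove k (N - k) 0 0)
  rw [← measure_univ (μ := μ), ← hcover, measure_biUnion_finset hdisj fun k _ => hDmeas k]
  exact Finset.sum_congr rfl fun k _ => (hD k).symm

/-- A Sparre Andersen type bound: each term of `sum_measure_stayAbove_mul` is at least `q_N²`,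
since `q_n = μ (stayAbove B 0 n 0 0)` is nonincreasing in `n`. -/
lemma measure_stayAbove_zero_le (hBM : IsStandardBM μ B) (N : ℕ) :
    (μ (stayAbove B 0 N 0 0)).toReal ≤ 1 / Real.sqrt (N + 1) := by
  set q := μ (stayAbove B 0 N 0 0)
  have hsum : (N + 1 : ℝ≥0∞) * (q * q) ≤ 1 := by
    calc (N + 1 : ℝ≥0∞) * (q * q) = ∑ k ∈ Finset.range (N + 1), q * q := by simp
      _ ≤ ∑ k ∈ Finset.range (N + 1),
            μ (stayAbove B 0 k 0 0) * μ (stayAbove B 0 (N - k) 0 0) :=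
        Finset.sum_le_sum fun k hk => mul_le_mul'
          (measure_mono (stayAbove_subset_of_le 0 0 (by simpa [Nat.lt_succ_iff] using hk)))
          (measure_mono (stayAbove_subset_of_le 0 0 (Nat.sub_le N k)))
      _ = 1 := hBM.sum_measure_stayAbove_mul N
  have hreal : (N + 1 : ℝ) * (q.toReal * q.toReal) ≤ 1 := by
    simpa [ENNReal.toReal_mul, ENNReal.toReal_add] using ENNReal.toReal_mono (by simp) hsum
  rw [le_div_iff₀ (by positivity), ← Real.sqrt_mul_self ENNReal.toReal_nonneg, ← Real.sqrt_mul
    (mul_self_nonneg _)]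
  exact Real.sqrt_le_one.mpr (by linarith)

lemma measure_exists_isMin_le (hBM : IsStandardBM μ B) (j N : ℕ) :
    μ {ω | ∃ k ≤ j, ∀ i ≤ N, B k ω ≤ B i ω}
      ≤ (j + 1) * μ (stayAbove B 0 (N - j) 0 0) := by
  have hsub : {ω | ∃ k ≤ j, ∀ i ≤ N, B k ω ≤ B i ω}
      ⊆ ⋃ k ∈ Finset.range (j + 1), stayAbove B k (N - k) 0 0 := by
    rintro ω ⟨k, hkj, hk⟩
    refine Set.mem_biUnion (Finset.mem_range.mpr (Nat.lt_succ_of_le hkj)) fun m _ hm => ?_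
    simpa using hk (k + m) (by omega)
  calc _ ≤ ∑ k ∈ Finset.range (j + 1), μ (stayAbove B k (N - k) 0 0) :=
        (measure_mono hsub).trans (measure_biUnion_finset_le _ _)
    _ ≤ ∑ k ∈ Finset.range (j + 1), μ (stayAbove B 0 (N - j) 0 0) := by
        refine Finset.sum_le_sum fun k hk => ?_
        rw [hBM.measure_stayAbove, ← hBM.measure_stayAbove 0]
        exact measure_mono (stayAbove_subset_of_le 0 0 (by simp at hk; omega))
    _ = (j + 1) * μ (stayAbove B 0 (N - j) 0 0) := by simp

/-- After a dip to `-(b + 1)` at time `L` and a rise of `b + 1` until time `2L`, staying above `-b`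
for `n` more steps puts the minimum of `B 0, …, B (2L + n)` before time `2L`. -/
lemma mul_measure_stayAbove_neg_le (hBM : IsStandardBM μ B) (n : ℕ) {L : ℕ} {b : ℝ}
    (hbL : b + 1 ≤ Real.sqrt L) :
    gaussianReal 0 1 (Set.Ici 1) * gaussianReal 0 1 (Set.Ici 1) * μ (stayAbove B 0 n (-b) 0)
      ≤ ((L + L : ℕ) + 1) * μ (stayAbove B 0 n 0 0) := by
  let F : Set Ω := {ω | B L ω ≤ -(b + 1) ∧ b + 1 ≤ B (L + L : ℕ) ω - B L ω}
  let A : Set (Fin (L + L) → ℝ) :=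
    {z | partialSum z L ≤ -(b + 1) ∧ b + 1 ≤ partialSum z (L + L) - partialSum z L}
  have hFA : F = increments B 0 (L + L) ⁻¹' A := by
    ext ω
    simp [F, A, partialSum_increments 0 (L + L) ω, hBM.apply_zero]
  have hA : MeasurableSet A := by
    simp only [A, Set.ofPred_and]
    exact (measurableSet_le (by fun_prop) measurable_const).inter
      (measurableSet_le measurable_const (by fun_prop))
  have hmin : F ∩ stayAbove B (L + L) n (-b) 0
      ⊆ {ω | ∃ k ≤ L + L, ∀ i ≤ L + L + n, B k ω ≤ B i ω} := by
    rintro ω ⟨⟨hdip, hrise⟩, hstay⟩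
    obtain ⟨k, hk, -, hkmin⟩ := exists_first_argmin (fun k : ℕ => B k ω) (L + L + n)
    refine ⟨k, ?_, hkmin⟩
    by_contra! hkL
    have hstayk := hstay (k - (L + L)) (by omega) (by omega)
    rw [Nat.add_sub_cancel' hkL.le] at hstayk
    linarith [hkmin L (by omega)]
  calc _ ≤ μ F * μ (stayAbove B 0 n (-b) 0) := by gcongr; exact hBM.le_measure_dip_rise hbL
    _ = μ (F ∩ stayAbove B (L + L) n (-b) 0) := by rw [hFA, hBM.measure_inter_stayAbove hA]
    _ ≤ ((L + L : ℕ) + 1) * μ (stayAbove B 0 (L + L + n - (L + L)) 0 0) :=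
        (measure_mono hmin).trans (hBM.measure_exists_isMin_le _ _)
    _ = ((L + L : ℕ) + 1) * μ (stayAbove B 0 n 0 0) := by rw [Nat.add_sub_cancel_left]

lemma measure_stayAbove_neg_le (hBM : IsStandardBM μ B) (n : ℕ) (b : ℝ) :
    (μ (stayAbove B 0 n (-b) 0)).toReal
      ≤ (2 * (b + 1) ^ 2 + 3)
        / ((gaussianReal 0 1 (Set.Ici 1)).toReal ^ 2 * Real.sqrt (n + 1)) := by
  set δ := gaussianReal 0 1 (Set.Ici 1)
  set L := ⌈(b + 1) ^ 2⌉₊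
  have hbL : b + 1 ≤ Real.sqrt L := Real.le_sqrt_of_sq_le (Nat.le_ceil _)
  have hLb : (L : ℝ) ≤ (b + 1) ^ 2 + 1 := (Nat.ceil_lt_add_one (by positivity)).le
  have hδ : 0 < δ.toReal := ENNReal.toReal_pos gaussianReal_Ici_one_pos.ne' (measure_ne_top _ _)
  have hreal := ENNReal.toReal_mono (ENNReal.mul_ne_top (by simp) (measure_ne_top _ _))
    (hBM.mul_measure_stayAbove_neg_le n hbL)
  simp only [ENNReal.toReal_mul, ENNReal.toReal_add (ENNReal.natCast_ne_top _) ENNReal.one_ne_top,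
    ENNReal.toReal_natCast, ENNReal.toReal_one] at hreal
  rw [le_div_iff₀ (by positivity)]
  calc _ = δ.toReal * δ.toReal * (μ (stayAbove B 0 n (-b) 0)).toReal * Real.sqrt (n + 1) := by
        ring
    _ ≤ ((L + L : ℕ) + 1) * (μ (stayAbove B 0 n 0 0)).toReal * Real.sqrt (n + 1) := by gcongr
    _ ≤ (2 * (b + 1) ^ 2 + 3) * (1 / Real.sqrt (n + 1)) * Real.sqrt (n + 1) := by
        gcongr ?_ * ?_ * _
        · push_cast; linarith
        · exact hBM.measure_stayAbove_zero_le n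
    _ = 2 * (b + 1) ^ 2 + 3 := by field_simp

lemma measure_le_and_stayAbove_eq_lintegral (hBM : IsStandardBM μ B) {X : Ω → ℝ}
    (hX : Measurable X) (hindep : IndepFun X (fun ω t => B t ω) μ) (n : ℕ) (h : ℝ) :
    μ {ω | X ω ≤ 0 ∧ ω ∈ stayAbove B 0 n (X ω) h}
      = ∫⁻ y in Set.Iic 0, μ (stayAbove B 0 n y h) ∂μ.map X := by
  let S : Set (ℝ × (Fin n → ℝ)) := {p | p.1 ≤ 0 ∧ p.2 ∈ staySet n p.1 h}
  have hS : MeasurableSet S := (measurableSet_le measurable_fst measurable_const).inter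
    (measurableSet_setOf_mem_staySet measurable_fst measurable_snd h)
  have hinc : IndepFun X (increments B 0 n) μ :=
    hindep.comp measurable_id (measurable_pi_lambda _ fun _ =>
      (measurable_pi_apply _).sub (measurable_pi_apply _))
  have hpair :
      μ.map (fun ω => (X ω, increments B 0 n ω)) = (μ.map X).prod (stdGaussianPi n) := by
    rw [(indepFun_iff_map_prod_eq_prod_map_map hX.aemeasurable
      (hBM.measurable_increments 0 n).aemeasurable).mp hinc, hBM.map_increments]
  have hpre : {ω | X ω ≤ 0 ∧ ω ∈ stayAbove B 0 n (X ω) h}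
      = (fun ω => (X ω, increments B 0 n ω)) ⁻¹' S := by
    simp only [stayAbove_eq_preimage]
    rfl
  rw [hpre, ← Measure.map_apply (hX.prodMk (hBM.measurable_increments 0 n)) hS, hpair,
    Measure.prod_apply hS, ← lintegral_indicator measurableSet_Iic]
  congr 1 with y
  by_cases hy : y ≤ 0
  · simp [S, hy, hBM.measure_stayAbove]
  · simp [S, hy]

lemma measure_stayAbove_le_of_nonpos (hBM : IsStandardBM μ B) (n : ℕ) {y h : ℝ} (hy : y ≤ 0)
    (hh : 0 ≤ h) :
    μ (stayAbove B 0 n y h) ≤ ENNReal.ofReal (5 / ((gaussianReal 0 1 (Set.Ici 1)).toReal ^ 2 *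
      Real.sqrt (n + 1)) * rexp (-(n * h ^ 2 / 2)) * rexp (-(h + 2) * y)) := by
  set c := 5 / ((gaussianReal 0 1 (Set.Ici 1)).toReal ^ 2 * Real.sqrt (n + 1))
  have hpoly : 2 * (-y + 1) ^ 2 + 3 ≤ 5 * rexp (-2 * y) := by
    have h1 : 1 + -y ≤ rexp (-y) := by linarith [Real.add_one_le_exp (-y)]
    have h2 : rexp (-2 * y) = rexp (-y) * rexp (-y) := by rw [← Real.exp_add]; ring_nf
    nlinarith [Real.exp_nonneg (-y)]
  have hneg : (μ (stayAbove B 0 n y 0)).toReal ≤ c * rexp (-2 * y) := by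
    refine (neg_neg y ▸ hBM.measure_stayAbove_neg_le n (-y)).trans ?_
    rw [div_mul_eq_mul_div]
    gcongr
  calc μ (stayAbove B 0 n y h)
      ≤ ENNReal.ofReal (rexp (-(h * y) - n * h ^ 2 / 2)) * μ (stayAbove B 0 n y 0) :=
        hBM.measure_stayAbove_le_exp_mul 0 n hy hh
    _ ≤ ENNReal.ofReal (rexp (-(h * y) - n * h ^ 2 / 2))
          * ENNReal.ofReal (c * rexp (-2 * y)) := by
        gcongr
        exact ENNReal.le_ofReal_iff_toReal_le (measure_ne_top _ _) (by positivity) |>.mpr hneg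
    _ = _ := by
        rw [← ENNReal.ofReal_mul (Real.exp_nonneg _)]
        congr 1
        rw [mul_left_comm, mul_assoc, ← Real.exp_add, ← Real.exp_add]
        ring_nf

lemma measure_le_and_stayAbove_le (hBM : IsStandardBM μ B) {X : Ω → ℝ} (hX : Measurable X)
    (hindep : IndepFun X (fun ω t => B t ω) μ) {m : ℝ} {v : ℝ≥0}
    (hXlaw : μ.map X = gaussianReal m v) (n : ℕ) {h : ℝ} (hh : 0 ≤ h) :
    μ {ω | X ω ≤ 0 ∧ ω ∈ stayAbove B 0 n (X ω) h}
      ≤ ENNReal.ofReal (5 / ((gaussianReal 0 1 (Set.Ici 1)).toReal ^ 2 * Real.sqrt (n + 1))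
          * rexp (-(n * h ^ 2 / 2)) * rexp (-(h + 2) * m + (h + 2) ^ 2 * v / 2)) := by
  set c := 5 / ((gaussianReal 0 1 (Set.Ici 1)).toReal ^ 2 * Real.sqrt (n + 1))
    * rexp (-(n * h ^ 2 / 2))
  rw [hBM.measure_le_and_stayAbove_eq_lintegral hX hindep, hXlaw]
  calc ∫⁻ y in Set.Iic 0, μ (stayAbove B 0 n y h) ∂gaussianReal m v
      ≤ ∫⁻ y, ENNReal.ofReal (c * rexp (-(h + 2) * y)) ∂gaussianReal m v :=
        (setLIntegral_mono' measurableSet_Iic fun y hy =>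
          hBM.measure_stayAbove_le_of_nonpos n hy hh).trans
          (setLIntegral_le_lintegral _ _)
    _ = ENNReal.ofReal (c * rexp (-(h + 2) * m + (h + 2) ^ 2 * v / 2)) := by
        simp_rw [ENNReal.ofReal_mul (by positivity : 0 ≤ c)]
        rw [lintegral_const_mul' _ _ ENNReal.ofReal_ne_top, lintegral_exp_gaussianReal, neg_sq]

end IsStandardBM

theorem bm_stay_above_gaussian_level_subcritical_general (K : ℝ) :
    ∃ C c : ℝ, 0 < C ∧ 0 < c ∧
      ∀ (Ω : Type) (_ : MeasurableSpace Ω) (μ : Measure Ω), IsProbabilityMeasure μ →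
      ∀ (B : ℝ → Ω → ℝ), IsStandardBM μ B →
      ∀ h : ℝ, 0 < h →
      ∀ (X : Ω → ℝ), Measurable X →
      ∀ (mX : ℝ) (vX : ℝ≥0), |mX| ≤ K → (vX : ℝ) ≤ K →
        Measure.map X μ = gaussianReal mX vX →
        IndepFun X (fun ω => fun t : ℝ => B t ω) μ →
      ∀ T : ℝ, C ≤ T →
        (μ {ω | ∀ t ∈ Set.Icc (0 : ℝ) T, X ω ≤ B t ω - h * t}).toReal
          ≤ (C / Real.sqrt T) * Real.exp (-(c * h ^ 2 * T)) := by
  set δ := (gaussianReal 0 1 (Set.Ici 1)).toReal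
  have hδ : 0 < δ := ENNReal.toReal_pos gaussianReal_Ici_one_pos.ne' (measure_ne_top _ _)
  refine ⟨max (5 / δ ^ 2 * rexp (8 * K)) (8 * K + 2), 1 / 8,
    lt_max_of_lt_left (by positivity), by norm_num, ?_⟩
  intro Ω _ μ _ B hBM h hh X hX mX vX hmX hvX hXlaw hindep T hT
  set n := ⌊T⌋₊
  have hT2 : 8 * K + 2 ≤ T := (le_max_right _ _).trans hT
  have hT0 : 0 ≤ T := by linarith [(abs_nonneg mX).trans hmX]
  calc (μ {ω | ∀ t ∈ Set.Icc (0 : ℝ) T, X ω ≤ B t ω - h * t}).toReal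
      ≤ (μ {ω | X ω ≤ 0 ∧ ω ∈ stayAbove B 0 n (X ω) h}).toReal :=
        ENNReal.toReal_mono (measure_ne_top _ _)
          (measure_mono (hBM.setOf_forall_Icc_subset hT0 (Nat.floor_le hT0)))
    _ ≤ 5 / δ ^ 2 / Real.sqrt (n + 1) * rexp (-(n * h ^ 2 / 2))
          * rexp (-(h + 2) * mX + (h + 2) ^ 2 * vX / 2) := by
        rw [div_div]
        exact ENNReal.toReal_le_of_le_ofReal (by positivity)
          (hBM.measure_le_and_stayAbove_le hX hindep hXlaw n hh.le)
    _ ≤ 5 / δ ^ 2 * rexp (8 * K) / Real.sqrt T * rexp (-(1 / 8 * h ^ 2 * T)) :=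
        div_sqrt_mul_exp_le (by positivity) hh.le hmX hvX hT2 (Nat.lt_floor_add_one T)
    _ ≤ _ := by gcongr; exact le_max_left _ _

/-- Subcritical Brownian estimate: against a drift `−h < 0`, the probability that the
drifted Brownian motion stays above an independent Gaussian level (with bounded mean and
variance) up to time `T ≥ C` is at most `(C/√T)·e^{−c h² T}`. -/
theorem bm_stay_above_gaussian_level_subcritical (K : ℝ) (hK : 0 < K) :
    ∃ C c : ℝ, 0 < C ∧ 0 < c ∧
      ∀ (Ω : Type) (_ : MeasurableSpace Ω) (μ : Measure Ω), IsProbabilityMeasure μ →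
      ∀ (B : ℝ → Ω → ℝ), IsStandardBM μ B →
      ∀ h : ℝ, 0 < h →
      ∀ (X : Ω → ℝ), Measurable X →
      ∀ (mX : ℝ) (vX : ℝ≥0), |mX| ≤ K → (vX : ℝ) ≤ K →
        Measure.map X μ = gaussianReal mX vX →
        IndepFun X (fun ω => fun t : ℝ => B t ω) μ →
      ∀ T : ℝ, C ≤ T →
        (μ {ω | ∀ t ∈ Set.Icc (0 : ℝ) T, X ω ≤ B t ω - h * t}).toReal
          ≤ (C / Real.sqrt T) * Real.exp (-(c * h ^ 2 * T)) :=
  bm_stay_above_gaussian_level_subcritical_general K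
end
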